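/- arXiv:2207.08229 — 4 statements merged into one kernel-verified Lean document; each statement's English description precedes it below -/
import Mathlib

section
/- In a deterministic Ex-BMDP, let π be an endogenous policy and fix an observation x with positive probability at time 0. Then for every t ≥ 1 and all (s', e') ∈ S × E, the joint conditional law of the latent state t steps later factorizes: P_π(s_t = s', e_t = e' | x_0 = x) = P_π(s_t = s' | s_0 = f*(x)) · P(e_t = e' | e_0 = f*_e(x)), where the endogenous marginal is the Markov chain on S with kernel P_S(s'|s) = Σ_{a∈A} π̄(a|s)·1[T(s,a) = s'] and the exogenous marginal is the Markov chain on E with kernel T_e. -/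
open Finset

/-- `n`-step transition probabilities (matrix power) of a kernel `K`. -/
noncomputable def matPow {W : Type*} [Fintype W] [DecidableEq W]
    (K : W → W → ℝ) : ℕ → W → W → ℝ
  | 0, w, w' => if w = w' then 1 else 0
  | n + 1, w, w' => ∑ u : W, K w u * matPow K n u w'

/-- Evolve a (sub)distribution `ν` for `n` steps under the kernel `K`. -/
noncomputable def evolveDist {W : Type*} [Fintype W]
    (K : W → W → ℝ) (ν : W → ℝ) : ℕ → W → ℝ
  | 0, w => ν w
  | n + 1, w' => ∑ w : W, evolveDist K ν n w * K w w'

/-- The Markov kernel on the endogenous states induced by a state policy `π̄`: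
`P_S(s'|s) = Σ_a π̄(a|s)·1[T(s,a)=s']`. -/
noncomputable def endoKer {S A : Type*} [Fintype A] [DecidableEq S]
    (T : S → A → S) (πbar : S → A → ℝ) : S → S → ℝ :=
  fun s s' => ∑ a : A, πbar s a * (if T s a = s' then 1 else 0)

/-- The Markov kernel of the joint latent process `(s_t, e_t)` under policy `π`
(observations and actions marginalized out). -/
noncomputable def jointKer {S E X A : Type*} [Fintype X] [Fintype A] [DecidableEq S]
    (T : S → A → S) (Te : E → E → ℝ) (q : S → E → X → ℝ) (π : X → A → ℝ) :
    S × E → S × E → ℝ :=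
  fun w w' =>
    ∑ x : X, q w.1 w.2 x *
      ((∑ a : A, π x a * (if T w.1 a = w'.1 then 1 else 0)) * Te w.2 w'.2)

/-! The block assumption makes `x` reveal the latent pair `(f*(x), f*_e(x))`, so conditioning on
`x_0 = x` collapses the initial law to a point mass there, and on the support of the emission the
policy agrees with the state policy `π̄`. Hence the joint latent kernel is the product of the
endogenous kernel and `T_e`, and a product kernel evolves a product law coordinatewise. -/

section MarkovChain

variable {W : Type*} [Fintype W]

theorem matPow_succ_right [DecidableEq W] (K : W → W → ℝ) (n : ℕ) (w w' : W) :
    matPow K (n + 1) w w' = ∑ u : W, matPow K n w u * K u w' := by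
  induction n generalizing w w' with
  | zero => simp [matPow]
  | succ n ih =>
    calc matPow K (n + 2) w w' = ∑ u, K w u * matPow K (n + 1) u w' := rfl
      _ = ∑ u, K w u * ∑ v, matPow K n u v * K v w' := by simp only [ih]
      _ = ∑ v, (∑ u, K w u * matPow K n u v) * K v w' := by
          simp only [mul_sum, sum_mul, mul_assoc]
          exact sum_comm
      _ = ∑ v, matPow K (n + 1) w v * K v w' := rfl

theorem evolveDist_const_mul (K : W → W → ℝ) (ν : W → ℝ) (c : ℝ) (n : ℕ) (w : W) :
    evolveDist K (fun u => c * ν u) n w = c * evolveDist K ν n w := by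
  induction n generalizing w with
  | zero => rfl
  | succ n ih => simp only [evolveDist, ih, mul_sum, mul_assoc]

theorem evolveDist_row_eq_matPow [DecidableEq W] (K : W → W → ℝ) (w₀ : W) (n : ℕ) (w : W) :
    evolveDist K (K w₀) n w = matPow K (n + 1) w₀ w := by
  induction n generalizing w with
  | zero => simp [evolveDist, matPow]
  | succ n ih => simp only [evolveDist, ih, ← matPow_succ_right]

end MarkovChain

def prodKer {S E : Type*} (K₁ : S → S → ℝ) (K₂ : E → E → ℝ) : S × E → S × E → ℝ :=
  fun w w' => K₁ w.1 w'.1 * K₂ w.2 w'.2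

theorem evolveDist_prodKer {S E : Type*} [Fintype S] [Fintype E]
    (K₁ : S → S → ℝ) (K₂ : E → E → ℝ) (g : S → ℝ) (h : E → ℝ) (n : ℕ) (s : S) (e : E) :
    evolveDist (prodKer K₁ K₂) (fun w => g w.1 * h w.2) n (s, e)
      = evolveDist K₁ g n s * evolveDist K₂ h n e := by
  induction n generalizing s e with
  | zero => rfl
  | succ n ih =>
    simp only [evolveDist, Fintype.sum_prod_type, ih, prodKer, sum_mul_sum]
    exact sum_congr rfl fun _ _ => sum_congr rfl fun _ _ => by ring

section ExBMDP

variable {S E X A : Type*} {q : S → E → X → ℝ} {fstar : X → S} {fstarE : X → E}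

theorem sum_mul_emission_eq_decoded [Fintype S] [Fintype E]
    (hq_nonneg : ∀ s e x, 0 ≤ q s e x)
    (hblock : ∀ s e x, 0 < q s e x → fstar x = s ∧ fstarE x = e)
    (μ F : S × E → ℝ) (x : X) :
    ∑ w : S × E, μ w * q w.1 w.2 x * F w
      = μ (fstar x, fstarE x) * q (fstar x) (fstarE x) x * F (fstar x, fstarE x) := by
  refine sum_eq_single (fstar x, fstarE x) (fun w _ hw => ?_) (absurd (mem_univ _))
  rcases (hq_nonneg w.1 w.2 x).lt_or_eq with hpos | hzero
  · obtain ⟨hs, he⟩ := hblock w.1 w.2 x hpos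
    exact absurd (Prod.ext hs.symm he.symm) hw
  · rw [← hzero, mul_zero, zero_mul]

theorem endoKer_eq_of_emission_pos [Fintype A] [DecidableEq S] (T : S → A → S) {π : X → A → ℝ} {πbar : S → A → ℝ}
    (hπbar : ∀ s e x, 0 < q s e x → ∀ a, πbar s a = π x a)
    {s : S} {e : E} {x : X} (hpos : 0 < q s e x) (s' : S) :
    endoKer T πbar s s' = ∑ a : A, π x a * (if T s a = s' then 1 else 0) := by
  simp only [endoKer, hπbar s e x hpos]

theorem jointKer_eq_prodKer [Fintype X] [Fintype A] [DecidableEq S] (T : S → A → S) (Te : E → E → ℝ) {π : X → A → ℝ}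
    {πbar : S → A → ℝ}
    (hq_nonneg : ∀ s e x, 0 ≤ q s e x) (hq_sum : ∀ s e, ∑ x : X, q s e x = 1)
    (hπbar : ∀ s e x, 0 < q s e x → ∀ a, πbar s a = π x a) :
    jointKer T Te q π = prodKer (endoKer T πbar) Te := by
  funext w w'
  calc jointKer T Te q π w w' = ∑ y : X, q w.1 w.2 y * prodKer (endoKer T πbar) Te w w' := by
        refine sum_congr rfl fun y _ => ?_
        rcases (hq_nonneg w.1 w.2 y).lt_or_eq with hpos | hzero
        · rw [prodKer, endoKer_eq_of_emission_pos T hπbar hpos]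
        · rw [← hzero, zero_mul, zero_mul]
    _ = prodKer (endoKer T πbar) Te w w' := by rw [← sum_mul, hq_sum, one_mul]

end ExBMDP

theorem ac_state_latent_factorization_given_x0_general
    {S E X A : Type*}
    [Fintype S] [Fintype E] [Fintype X] [Fintype A]
    [DecidableEq S] [DecidableEq E]
    -- deterministic Ex-BMDP data
    (T : S → A → S) (Te : E → E → ℝ) (q : S → E → X → ℝ)
    (fstar : X → S) (fstarE : X → E)
    (hq_nonneg : ∀ s e x, 0 ≤ q s e x) (hq_sum : ∀ s e, ∑ x : X, q s e x = 1)
    -- block assumption: the decoders recover the latent state on the support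
    (hblock : ∀ s e x, 0 < q s e x → fstar x = s ∧ fstarE x = e)
    -- endogenous policy π and its induced state policy π̄
    (π : X → A → ℝ) (πbar : S → A → ℝ)
    (hπbar : ∀ s e x, 0 < q s e x → ∀ a, πbar s a = π x a)
    -- initial latent distribution
    (μ0 : S × E → ℝ)
    -- a fixed observation with positive probability at time 0
    (x : X) (hx : 0 < ∑ w : S × E, μ0 w * q w.1 w.2 x)
    (t : ℕ) (ht : 1 ≤ t) (s' : S) (e' : E) :
    -- P_π(s_t = s', e_t = e' | x_0 = x):  the joint law of (x_0 = x, s_1, e_1)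
    -- is evolved (t-1) steps under the joint latent kernel and normalized by
    -- P(x_0 = x); it factorizes into the two marginal chains.
    evolveDist (jointKer T Te q π)
        (fun w1 => ∑ w : S × E, μ0 w * q w.1 w.2 x *
          ((∑ a : A, π x a * (if T w.1 a = w1.1 then 1 else 0)) * Te w.2 w1.2))
        (t - 1) (s', e')
      / (∑ w : S × E, μ0 w * q w.1 w.2 x)
    = matPow (endoKer T πbar) t (fstar x) s' * matPow Te t (fstarE x) e' := by
  set C := μ0 (fstar x, fstarE x) * q (fstar x) (fstarE x) x
  have hnorm : ∑ w : S × E, μ0 w * q w.1 w.2 x = C := by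
    simpa using sum_mul_emission_eq_decoded hq_nonneg hblock μ0 (fun _ => 1) x
  have hC : C ≠ 0 := (hnorm ▸ hx).ne'
  have hq_pos : 0 < q (fstar x) (fstarE x) x :=
    (hq_nonneg _ _ x).lt_of_ne' (right_ne_zero_of_mul hC)
  have hinit : (fun w1 : S × E => ∑ w : S × E, μ0 w * q w.1 w.2 x *
        ((∑ a : A, π x a * (if T w.1 a = w1.1 then 1 else 0)) * Te w.2 w1.2))
      = fun w1 => C * (endoKer T πbar (fstar x) w1.1 * Te (fstarE x) w1.2) := by
    funext w1
    rw [sum_mul_emission_eq_decoded hq_nonneg hblock, endoKer_eq_of_emission_pos T hπbar hq_pos,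
      mul_assoc]
  obtain ⟨n, rfl⟩ := Nat.exists_eq_add_of_le' ht
  rw [hnorm, hinit, jointKer_eq_prodKer T Te hq_nonneg hq_sum hπbar, evolveDist_const_mul,
    evolveDist_prodKer, evolveDist_row_eq_matPow, evolveDist_row_eq_matPow, Nat.add_sub_cancel,
    mul_div_cancel_left₀ _ hC]

theorem ac_state_latent_factorization_given_x0
    {S E X A : Type*}
    [Fintype S] [Fintype E] [Fintype X] [Fintype A]
    [DecidableEq S] [DecidableEq E] [DecidableEq X] [DecidableEq A]
    [Nonempty S] [Nonempty E] [Nonempty X] [Nonempty A]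
    -- deterministic Ex-BMDP data
    (T : S → A → S) (Te : E → E → ℝ) (q : S → E → X → ℝ)
    (fstar : X → S) (fstarE : X → E)
    (hTe_nonneg : ∀ e e', 0 ≤ Te e e') (hTe_sum : ∀ e, ∑ e' : E, Te e e' = 1)
    (hq_nonneg : ∀ s e x, 0 ≤ q s e x) (hq_sum : ∀ s e, ∑ x : X, q s e x = 1)
    -- block assumption: the decoders recover the latent state on the support
    (hblock : ∀ s e x, 0 < q s e x → fstar x = s ∧ fstarE x = e)
    -- endogenous policy π and its induced state policy π̄
    (π : X → A → ℝ) (πbar : S → A → ℝ)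
    (hπ_nonneg : ∀ x a, 0 ≤ π x a) (hπ_sum : ∀ x, ∑ a : A, π x a = 1)
    (hendo : ∀ x1 x2, fstar x1 = fstar x2 → π x1 = π x2)
    (hπbar : ∀ s e x, 0 < q s e x → ∀ a, πbar s a = π x a)
    -- initial latent distribution
    (μ0 : S × E → ℝ)
    (hμ0_nonneg : ∀ w, 0 ≤ μ0 w) (hμ0_sum : ∑ w : S × E, μ0 w = 1)
    -- a fixed observation with positive probability at time 0
    (x : X) (hx : 0 < ∑ w : S × E, μ0 w * q w.1 w.2 x)
    (t : ℕ) (ht : 1 ≤ t) (s' : S) (e' : E) :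
    -- P_π(s_t = s', e_t = e' | x_0 = x):  the joint law of (x_0 = x, s_1, e_1)
    -- is evolved (t-1) steps under the joint latent kernel and normalized by
    -- P(x_0 = x); it factorizes into the two marginal chains.
    evolveDist (jointKer T Te q π)
        (fun w1 => ∑ w : S × E, μ0 w * q w.1 w.2 x *
          ((∑ a : A, π x a * (if T w.1 a = w1.1 then 1 else 0)) * Te w.2 w1.2))
        (t - 1) (s', e')
      / (∑ w : S × E, μ0 w * q w.1 w.2 x)
    = matPow (endoKer T πbar) t (fstar x) s' * matPow Te t (fstarE x) e' :=
  ac_state_latent_factorization_given_x0_general T Te q fstar fstarE hq_nonneg hq_sum hblock π πbar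
    hπbar μ0 x hx t ht s' e'
end

section
/- In a deterministic Ex-BMDP, let π be an endogenous policy and let x_0 be drawn from some distribution μ over X. Then the Bayes-optimal multi-step action predictor is piecewise constant with respect to the control-endogenous partition: for every a ∈ A, t ≥ 1, and observations x_1, x_2, x'_1, x'_2 ∈ X with f*(x_1) = f*(x_2), f*(x'_1) = f*(x'_2), P(x_0 = x_1, x_t = x'_1) > 0 and P(x_0 = x_2, x_t = x'_2) > 0, it holds that P_π(a_0 = a | x_0 = x_1, x_t = x'_1) = P_π(a_0 = a | x_0 = x_2, x_t = x'_2). -/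
open Finset

/-- The joint probability `P(x_0 = x, a_0 = a, x_t = x')` (for `t ≥ 1`) of the
Ex-BMDP process: `x_0` is emitted from `(s_0,e_0) ~ μ0`, the first action is
`a_0`, afterwards the policy `π` is executed, and `x_t` is observed. -/
noncomputable def jointXAX {S E X A : Type*}
    [Fintype S] [Fintype E] [Fintype X] [Fintype A]
    [DecidableEq S] [DecidableEq E] [DecidableEq X] [DecidableEq A]
    (T : S → A → S) (Te : E → E → ℝ) (q : S → E → X → ℝ) (π : X → A → ℝ)
    (μ0 : S × E → ℝ) (x : X) (a : A) (x' : X) (t : ℕ) : ℝ :=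
  ∑ w0 : S × E, μ0 w0 * q w0.1 w0.2 x * π x a *
    ∑ w : S × E,
      evolveDist (jointKer T Te q π)
        (fun w1 => (if w1.1 = T w0.1 a then (1 : ℝ) else 0) * Te w0.2 w1.2)
        (t - 1) w * q w.1 w.2 x'

/-!
STATEMENT 2: The Bayes-optimal multi-step action predictor
P_π(a_0 = a | x_0 = x, x_t = x') is piecewise constant with respect to the
control-endogenous partition: it takes the same value on any two pairs of
observations with the same endogenous decodings (under positivity).
The conditional is the joint P(x_0, a_0, x_t) normalized by
P(x_0, x_t) = Σ_{a'} P(x_0, a_0 = a', x_t).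
-/

lemma evolveDist_prod {S E : Type*} [Fintype S] [Fintype E]
    (K : S → S → ℝ) (L : E → E → ℝ) (ν : S → ℝ) (ρ : E → ℝ) :
    ∀ (n : ℕ) (w : S × E),
      evolveDist (fun w w' : S × E => K w.1 w'.1 * L w.2 w'.2)
        (fun w => ν w.1 * ρ w.2) n w
      = evolveDist K ν n w.1 * evolveDist L ρ n w.2 := by
  intro n
  induction n with
  | zero => intro w; rfl
  | succ n ih =>
    intro w
    simp only [evolveDist, ih]
    rw [Finset.sum_mul_sum, Fintype.sum_prod_type]
    refine Finset.sum_congr rfl fun s _ => Finset.sum_congr rfl fun e _ => ?_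
    ring

lemma jointKer_factor {S E X A : Type*} [Fintype X] [Fintype A] [DecidableEq S]
    (T : S → A → S) (Te : E → E → ℝ) (q : S → E → X → ℝ) (π : X → A → ℝ)
    (πbar : S → A → ℝ)
    (hq_nonneg : ∀ s e x, 0 ≤ q s e x) (hq_sum : ∀ s e, ∑ x : X, q s e x = 1)
    (hπbar : ∀ s e x, 0 < q s e x → ∀ a, πbar s a = π x a) :
    jointKer T Te q π = fun w w' : S × E => endoKer T πbar w.1 w'.1 * Te w.2 w'.2 := by
  funext w w'
  unfold jointKer
  have key : ∀ x : X,
      q w.1 w.2 x * ((∑ a : A, π x a * (if T w.1 a = w'.1 then 1 else 0)) * Te w.2 w'.2)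
      = q w.1 w.2 x * (endoKer T πbar w.1 w'.1 * Te w.2 w'.2) := by
    intro x
    rcases (hq_nonneg w.1 w.2 x).eq_or_lt with h | h
    · rw [← h, zero_mul, zero_mul]
    · unfold endoKer
      congr 2
      exact Finset.sum_congr rfl fun a _ => by rw [hπbar w.1 w.2 x h a]
  rw [Finset.sum_congr rfl fun x _ => key x, ← Finset.sum_mul, hq_sum, one_mul]

lemma evolveDist_nonneg {W : Type*} [Fintype W] (K : W → W → ℝ) (ν : W → ℝ)
    (hK : ∀ w w', 0 ≤ K w w') (hν : ∀ w, 0 ≤ ν w) :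
    ∀ (n : ℕ) (w : W), 0 ≤ evolveDist K ν n w := by
  intro n
  induction n with
  | zero => exact hν
  | succ n ih =>
    intro w
    exact Finset.sum_nonneg fun u _ => mul_nonneg (ih u) (hK u w)

lemma jointXAX_collapse {S E X A : Type*}
    [Fintype S] [Fintype E] [Fintype X] [Fintype A]
    [DecidableEq S] [DecidableEq E] [DecidableEq X] [DecidableEq A]
    (T : S → A → S) (Te : E → E → ℝ) (q : S → E → X → ℝ)
    (fstar : X → S) (fstarE : X → E)
    (hq_nonneg : ∀ s e x, 0 ≤ q s e x) (hq_sum : ∀ s e, ∑ x : X, q s e x = 1)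
    (hblock : ∀ s e x, 0 < q s e x → fstar x = s ∧ fstarE x = e)
    (π : X → A → ℝ) (πbar : S → A → ℝ)
    (hπbar : ∀ s e x, 0 < q s e x → ∀ a, πbar s a = π x a)
    (μ0 : S × E → ℝ) (x x' : X) (a : A) (t : ℕ) :
    jointXAX T Te q π μ0 x a x' t
      = (μ0 (fstar x, fstarE x) * q (fstar x) (fstarE x) x
          * evolveDist Te (fun e1 => Te (fstarE x) e1) (t - 1) (fstarE x')
          * q (fstar x') (fstarE x') x')
        * (πbar (fstar x) a *
            evolveDist (endoKer T πbar)
              (fun s1 => if s1 = T (fstar x) a then (1 : ℝ) else 0)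
              (t - 1) (fstar x')) := by
  have hq0 : ∀ (s : S) (e : E) (y : X), (s, e) ≠ (fstar y, fstarE y) → q s e y = 0 := by
    intro s e y hne
    rcases (hq_nonneg s e y).eq_or_lt with h | h
    · exact h.symm
    · obtain ⟨h1, h2⟩ := hblock s e y h
      exact absurd (by rw [h1, h2]) hne
  unfold jointXAX
  rw [Finset.sum_eq_single (fstar x, fstarE x)]
  · rw [jointKer_factor T Te q π πbar hq_nonneg hq_sum hπbar]
    have hev : ∀ w : S × E,
        evolveDist (fun w w' : S × E => endoKer T πbar w.1 w'.1 * Te w.2 w'.2)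
          (fun w1 => (if w1.1 = T (fstar x, fstarE x).1 a then (1 : ℝ) else 0)
            * Te (fstar x, fstarE x).2 w1.2) (t - 1) w
        = evolveDist (endoKer T πbar)
            (fun s1 => if s1 = T (fstar x) a then (1 : ℝ) else 0) (t - 1) w.1
          * evolveDist Te (fun e1 => Te (fstarE x) e1) (t - 1) w.2 :=
      fun w => evolveDist_prod (endoKer T πbar) Te
        (fun s1 => if s1 = T (fstar x) a then (1 : ℝ) else 0)
        (fun e1 => Te (fstarE x) e1) (t - 1) w
    rw [Finset.sum_congr rfl fun w _ => by rw [hev w]]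
    rw [Finset.sum_eq_single (fstar x', fstarE x')]
    · rcases (hq_nonneg (fstar x) (fstarE x) x).eq_or_lt with h | h
      · rw [← h]; ring
      · rw [← hπbar (fstar x) (fstarE x) x h a]; ring
    · intro w _ hw
      rw [hq0 w.1 w.2 x' (by simpa using hw), mul_zero]
    · intro h; exact absurd (Finset.mem_univ _) h
  · intro w0 _ hw0
    rw [hq0 w0.1 w0.2 x (by simpa using hw0), mul_zero, zero_mul, zero_mul]
  · intro h; exact absurd (Finset.mem_univ _) h

theorem ac_state_inverse_model_piecewise_constant
    {S E X A : Type*}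
    [Fintype S] [Fintype E] [Fintype X] [Fintype A]
    [DecidableEq S] [DecidableEq E] [DecidableEq X] [DecidableEq A]
    [Nonempty S] [Nonempty E] [Nonempty X] [Nonempty A]
    -- deterministic Ex-BMDP data
    (T : S → A → S) (Te : E → E → ℝ) (q : S → E → X → ℝ)
    (fstar : X → S) (fstarE : X → E)
    (hTe_nonneg : ∀ e e', 0 ≤ Te e e') (hTe_sum : ∀ e, ∑ e' : E, Te e e' = 1)
    (hq_nonneg : ∀ s e x, 0 ≤ q s e x) (hq_sum : ∀ s e, ∑ x : X, q s e x = 1)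
    -- block assumption: the decoders recover the latent state on the support
    (hblock : ∀ s e x, 0 < q s e x → fstar x = s ∧ fstarE x = e)
    -- endogenous policy π and its induced state policy π̄
    (π : X → A → ℝ) (πbar : S → A → ℝ)
    (hπ_nonneg : ∀ x a, 0 ≤ π x a) (hπ_sum : ∀ x, ∑ a : A, π x a = 1)
    (hendo : ∀ x1 x2, fstar x1 = fstar x2 → π x1 = π x2)
    (hπbar : ∀ s e x, 0 < q s e x → ∀ a, πbar s a = π x a)
    -- initial latent distribution
    (μ0 : S × E → ℝ)
    (hμ0_nonneg : ∀ w, 0 ≤ μ0 w) (hμ0_sum : ∑ w : S × E, μ0 w = 1)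
    (x1 x2 x'1 x'2 : X)
    (hfx : fstar x1 = fstar x2) (hfx' : fstar x'1 = fstar x'2)
    (a : A) (t : ℕ) (ht : 1 ≤ t)
    -- P(x_0 = x1, x_t = x'1) > 0 and P(x_0 = x2, x_t = x'2) > 0
    (hpos1 : 0 < ∑ a' : A, jointXAX T Te q π μ0 x1 a' x'1 t)
    (hpos2 : 0 < ∑ a' : A, jointXAX T Te q π μ0 x2 a' x'2 t) :
    jointXAX T Te q π μ0 x1 a x'1 t / (∑ a' : A, jointXAX T Te q π μ0 x1 a' x'1 t)
      = jointXAX T Te q π μ0 x2 a x'2 t / (∑ a' : A, jointXAX T Te q π μ0 x2 a' x'2 t) := by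
  set g : A → ℝ := fun a' =>
    πbar (fstar x1) a' *
      evolveDist (endoKer T πbar)
        (fun s1 => if s1 = T (fstar x1) a' then (1 : ℝ) else 0) (t - 1) (fstar x'1)
    with hg
  set C1 : ℝ := μ0 (fstar x1, fstarE x1) * q (fstar x1) (fstarE x1) x1
      * evolveDist Te (fun e1 => Te (fstarE x1) e1) (t - 1) (fstarE x'1)
      * q (fstar x'1) (fstarE x'1) x'1 with hC1def
  set C2 : ℝ := μ0 (fstar x2, fstarE x2) * q (fstar x2) (fstarE x2) x2
      * evolveDist Te (fun e1 => Te (fstarE x2) e1) (t - 1) (fstarE x'2)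
      * q (fstar x'2) (fstarE x'2) x'2 with hC2def
  have h1 : ∀ a' : A, jointXAX T Te q π μ0 x1 a' x'1 t = C1 * g a' := fun a' =>
    jointXAX_collapse T Te q fstar fstarE hq_nonneg hq_sum hblock π πbar hπbar μ0
      x1 x'1 a' t
  have h2 : ∀ a' : A, jointXAX T Te q π μ0 x2 a' x'2 t = C2 * g a' := by
    intro a'
    rw [jointXAX_collapse T Te q fstar fstarE hq_nonneg hq_sum hblock π πbar hπbar μ0
      x2 x'2 a' t, hC2def]
    simp only [hg]
    rw [hfx, hfx']
  have hsum1 : (∑ a' : A, jointXAX T Te q π μ0 x1 a' x'1 t) = C1 * ∑ a' : A, g a' := by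
    simp only [h1]; rw [Finset.mul_sum]
  have hsum2 : (∑ a' : A, jointXAX T Te q π μ0 x2 a' x'2 t) = C2 * ∑ a' : A, g a' := by
    simp only [h2]; rw [Finset.mul_sum]
  have hC1 : C1 ≠ 0 := by
    intro h
    rw [hsum1, h, zero_mul] at hpos1
    exact lt_irrefl 0 hpos1
  have hC2 : C2 ≠ 0 := by
    intro h
    rw [hsum2, h, zero_mul] at hpos2
    exact lt_irrefl 0 hpos2
  rw [h1 a, hsum1, h2 a, hsum2, mul_div_mul_left _ _ hC1, mul_div_mul_left _ _ hC2]
end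

section
/- Consider a finite deterministic MDP with states S, actions A, transition function T, a state policy π̄ with π̄(a|s) ≥ π_min > 0 for all s, a, and an initial distribution μ with μ(s) > 0 for all s. Let h ≥ 1 and g : S → ℕ. Suppose (i) g is consistent with all inverse models up to horizon h+1: for all u ∈ S, h' ∈ {1,…,h+1}, and v_1, v_2 ∈ R(u, h'), g(v_1) = g(v_2) implies P(a|u,v_1,h') = P(a|u,v_2,h') for all a ∈ A; and (ii) g separates every pair of distinct states that both lie in R(u, h') for some common u ∈ S and some h' ≤ h. Then g separates every pair of distinct states that both lie in R(u, h+1) for some common u ∈ S, i.e., s_1 ≠ s_2 with s_1, s_2 ∈ R(u, h+1) implies g(s_1) ≠ g(s_2). -/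
open Finset

/-- `s'` is reachable from `s` in exactly `h` steps: there is a sequence of
`h` actions taking `s` to `s'` under `T`.  (`R(s,h)`.) -/
def reachIn {S A : Type*} (T : S → A → S) (s : S) (h : ℕ) (s' : S) : Prop :=
  ∃ l : List A, l.length = h ∧ l.foldl T s = s'

/-- The multi-step inverse model `P(a | s, s', h) = P(a_0 = a | s_0 = s, s_h = s')`
of the Markov process `s_0 ~ μ`, `a_i ~ π̄(·|s_i)`, `s_{i+1} = T(s_i, a_i)`,
written as the joint `P(s_0 = s, a_0 = a, s_h = s')` divided by the marginal
`P(s_0 = s, s_h = s')` (for `h ≥ 1`). -/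
noncomputable def invP {S A : Type*} [Fintype S] [Fintype A] [DecidableEq S]
    (T : S → A → S) (πbar : S → A → ℝ) (μ : S → ℝ)
    (a : A) (s s' : S) (h : ℕ) : ℝ :=
  (μ s * πbar s a * matPow (endoKer T πbar) (h - 1) (T s a) s')
    / (μ s * matPow (endoKer T πbar) h s s')

/-!
STATEMENT 6: Induction step of the coarsest-partition theorem.  If g is
consistent with all inverse models up to horizon h+1, and g separates every
pair of distinct states that are both reachable from some common state in a
common number h' ≤ h of steps, then g also separates every pair of distinct
states that are both reachable from a common state in h+1 steps.
-/


section Aux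
variable {S A : Type*} [Fintype S] [Fintype A] [DecidableEq S]
variable (T : S → A → S) (πbar : S → A → ℝ)

lemma endoKer_nonneg (hπ : ∀ s a, 0 ≤ πbar s a) (s s' : S) :
    0 ≤ endoKer T πbar s s' := by
  unfold endoKer
  exact Finset.sum_nonneg fun a _ => mul_nonneg (hπ s a) (by positivity)

lemma matPow_nonneg (hπ : ∀ s a, 0 ≤ πbar s a) :
    ∀ n (s s' : S), 0 ≤ matPow (endoKer T πbar) n s s' := by
  intro n
  induction n with
  | zero => intro s s'; unfold matPow; positivity
  | succ n ih =>
    intro s s'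
    unfold matPow
    exact Finset.sum_nonneg fun u _ =>
      mul_nonneg (endoKer_nonneg T πbar hπ s u) (ih u s')

lemma matPow_pos_of_reach (hπ : ∀ s a, 0 < πbar s a) :
    ∀ n (s s' : S), reachIn T s n s' → 0 < matPow (endoKer T πbar) n s s' := by
  intro n
  induction n with
  | zero =>
    rintro s s' ⟨l, hl, hf⟩
    rw [List.length_eq_zero_iff] at hl
    subst hl
    simp only [List.foldl_nil] at hf
    subst hf
    unfold matPow; simp
  | succ n ih =>
    rintro s s' ⟨l, hl, hf⟩
    cases l with
    | nil => simp at hl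
    | cons a t =>
      have ht : t.length = n := by simpa using hl
      have hreach : reachIn T (T s a) n s' := ⟨t, ht, by simpa using hf⟩
      have hK : 0 < endoKer T πbar s (T s a) := by
        unfold endoKer
        have hterm : 0 < πbar s a * (if T s a = T s a then 1 else 0) := by
          simp [hπ s a]
        calc (0:ℝ) < πbar s a * (if T s a = T s a then 1 else 0) := hterm
          _ ≤ ∑ a' : A, πbar s a' * (if T s a' = T s a then 1 else 0) :=
            Finset.single_le_sum (f := fun a' => πbar s a' * (if T s a' = T s a then 1 else 0))
              (fun a' _ => mul_nonneg (le_of_lt (hπ s a')) (by positivity))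
              (Finset.mem_univ a)
      have : 0 < endoKer T πbar s (T s a) * matPow (endoKer T πbar) n (T s a) s' :=
        mul_pos hK (ih (T s a) s' hreach)
      show 0 < matPow (endoKer T πbar) (n+1) s s'
      unfold matPow
      calc (0:ℝ) < endoKer T πbar s (T s a) * matPow (endoKer T πbar) n (T s a) s' := this
        _ ≤ ∑ u : S, endoKer T πbar s u * matPow (endoKer T πbar) n u s' :=
          Finset.single_le_sum (f := fun u => endoKer T πbar s u * matPow (endoKer T πbar) n u s')
            (fun u _ => mul_nonneg (endoKer_nonneg T πbar (fun s a => le_of_lt (hπ s a)) s u)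
              (matPow_nonneg T πbar (fun s a => le_of_lt (hπ s a)) n u s'))
            (Finset.mem_univ (T s a))

lemma reach_of_matPow_pos (hπ : ∀ s a, 0 ≤ πbar s a) :
    ∀ n (s s' : S), 0 < matPow (endoKer T πbar) n s s' → reachIn T s n s' := by
  intro n
  induction n with
  | zero =>
    intro s s' hpos
    unfold matPow at hpos
    by_cases hss : s = s'
    · exact ⟨[], rfl, hss⟩
    · simp [hss] at hpos
  | succ n ih =>
    intro s s' hpos
    unfold matPow at hpos
    obtain ⟨u, -, hu⟩ := Finset.exists_lt_of_sum_lt (f := fun _ : S => (0:ℝ))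
      (by simpa using hpos)
    have hu' : 0 < endoKer T πbar s u * matPow (endoKer T πbar) n u s' := by
      simpa using hu
    have hKpos : 0 < endoKer T πbar s u :=
      lt_of_le_of_ne (endoKer_nonneg T πbar hπ s u)
        (fun hc => by rw [← hc] at hu'; simpa using hu')
    have hMpos : 0 < matPow (endoKer T πbar) n u s' := by
      by_contra hc
      have h0 : matPow (endoKer T πbar) n u s' = 0 :=
        le_antisymm (not_lt.mp hc) (matPow_nonneg T πbar hπ n u s')
      rw [h0, mul_zero] at hu'
      exact lt_irrefl 0 hu' 
    have hTu : ∃ a : A, T s a = u := by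
      by_contra hno
      push_neg at hno
      have : endoKer T πbar s u = 0 := by
        unfold endoKer
        exact Finset.sum_eq_zero fun a _ => by simp [hno a]
      rw [this] at hKpos; exact lt_irrefl 0 hKpos
    obtain ⟨a, ha⟩ := hTu
    obtain ⟨t, ht, hf⟩ := ih u s' hMpos
    exact ⟨a :: t, by simpa using ht, by simp [ha, hf]⟩

end Aux

theorem ac_state_separation_induction_step
    {S A : Type*} [Fintype S] [Fintype A] [DecidableEq S] [DecidableEq A]
    [Nonempty S] [Nonempty A]
    (T : S → A → S) (πbar : S → A → ℝ) (μ : S → ℝ) (πmin : ℝ)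
    (hπmin : 0 < πmin) (hπbar_ge : ∀ s a, πmin ≤ πbar s a)
    (hπbar_sum : ∀ s, ∑ a : A, πbar s a = 1)
    (hμ_pos : ∀ s, 0 < μ s) (hμ_sum : ∑ s : S, μ s = 1)
    (h : ℕ) (hh : 1 ≤ h) (g : S → ℕ)
    -- (i) consistency with all inverse models up to horizon h+1
    (hcons : ∀ u : S, ∀ h' : ℕ, 1 ≤ h' → h' ≤ h + 1 → ∀ v1 v2 : S,
      reachIn T u h' v1 → reachIn T u h' v2 → g v1 = g v2 →
      ∀ a : A, invP T πbar μ a u v1 h' = invP T πbar μ a u v2 h')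
    -- (ii) g separates distinct states co-reachable in some common h' ≤ h steps
    (hsep : ∀ u : S, ∀ h' : ℕ, h' ≤ h → ∀ v1 v2 : S,
      reachIn T u h' v1 → reachIn T u h' v2 → v1 ≠ v2 → g v1 ≠ g v2) :
    -- conclusion: g separates distinct states co-reachable in h+1 steps
    ∀ u s1 s2 : S, reachIn T u (h + 1) s1 → reachIn T u (h + 1) s2 →
      s1 ≠ s2 → g s1 ≠ g s2 := by
  intro u s1 s2 hr1 hr2 hne hg
  have hπpos : ∀ s a, 0 < πbar s a := fun s a => lt_of_lt_of_le hπmin (hπbar_ge s a)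
  have hπnn : ∀ s a, 0 ≤ πbar s a := fun s a => le_of_lt (hπpos s a)
  obtain ⟨l1, hl1, hf1⟩ := hr1
  cases l1 with
  | nil => simp at hl1
  | cons a t =>
    have ht : t.length = h := by simpa using hl1
    have hv1 : reachIn T (T u a) h s1 := ⟨t, ht, by simpa using hf1⟩
    have hr1' : reachIn T u (h+1) s1 := ⟨a :: t, by simpa using ht, by simpa using hf1⟩
    -- invP a u s1 (h+1) > 0
    have hnum1 : 0 < μ u * πbar u a * matPow (endoKer T πbar) h (T u a) s1 :=
      mul_pos (mul_pos (hμ_pos u) (hπpos u a)) (matPow_pos_of_reach T πbar hπpos h _ _ hv1)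
    have hden1 : 0 < μ u * matPow (endoKer T πbar) (h+1) u s1 :=
      mul_pos (hμ_pos u) (matPow_pos_of_reach T πbar hπpos (h+1) _ _ hr1')
    have hinv1 : 0 < invP T πbar μ a u s1 (h+1) := by
      unfold invP
      simp only [Nat.add_sub_cancel]
      exact div_pos hnum1 hden1
    have heq := hcons u (h+1) (by omega) le_rfl s1 s2 hr1' hr2 hg a
    have hinv2 : 0 < invP T πbar μ a u s2 (h+1) := heq ▸ hinv1
    have hM2 : 0 < matPow (endoKer T πbar) h (T u a) s2 := by
      by_contra hc
      have h0 : matPow (endoKer T πbar) h (T u a) s2 = 0 :=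
        le_antisymm (not_lt.mp hc) (matPow_nonneg T πbar hπnn h _ _)
      unfold invP at hinv2
      simp only [Nat.add_sub_cancel, h0] at hinv2
      simp at hinv2
    have hv2 : reachIn T (T u a) h s2 := reach_of_matPow_pos T πbar hπnn h _ _ hM2
    exact hsep (T u a) h le_rfl s1 s2 hv1 hv2 hne hg
end

section
/- In a deterministic Ex-BMDP equipped with a reward function r : S × A → [0,1] that depends only on the control-endogenous state and the action, and with a product initial latent distribution μ_0(s,e) = μ_0^S(s)·μ_0^E(e), for every finite horizon H ≥ 1 the maximum over all (possibly history-dependent, observation-based) policies of the expected cumulative reward E[Σ_{t=0}^{H−1} r(s_t, a_t)] is attained by an endogenous policy, i.e., a policy whose action distribution at each time t depends on the observation history only through f*(x_t) and t. -/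
/-!
STATEMENT 10: In a deterministic Ex-BMDP with a reward r : S × A → [0,1]
depending only on the endogenous state and the action, and a product initial
latent distribution, for every horizon H ≥ 1 the maximum over all
history-dependent observation-based policies of E[Σ_{t<H} r(s_t, a_t)] is
attained by an endogenous policy, i.e. one whose action distribution depends on
the observation history only through f*(x_t) and t.
-/

open Finset

/-- Expected cumulative reward over `n` remaining steps, starting from latent
state `(s, e)`, under a history-dependent observation-based policy
(`π hist x a` = probability of action `a` given past observation-action pairs
`hist` and current observation `x`). -/
noncomputable def expRewAux {S E X A : Type*} [Fintype E] [Fintype X] [Fintype A]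
    (T : S → A → S) (Te : E → E → ℝ) (q : S → E → X → ℝ) (r : S → A → ℝ) :
    ℕ → (List (X × A) → X → A → ℝ) → S → E → ℝ
  | 0, _, _, _ => 0
  | n + 1, π, s, e =>
      ∑ x : X, q s e x * ∑ a : A, π [] x a *
        (r s a + ∑ e' : E, Te e e' *
          expRewAux T Te q r n (fun hist => π ((x, a) :: hist)) (T s a) e')

/-- `E[Σ_{t=0}^{H-1} r(s_t, a_t)]` under policy `π`, with initial latent
distribution `μ0S ⊗ μ0E`. -/
noncomputable def expRew {S E X A : Type*}
    [Fintype S] [Fintype E] [Fintype X] [Fintype A]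
    (T : S → A → S) (Te : E → E → ℝ) (q : S → E → X → ℝ) (r : S → A → ℝ)
    (μ0S : S → ℝ) (μ0E : E → ℝ) (H : ℕ) (π : List (X × A) → X → A → ℝ) : ℝ :=
  ∑ s : S, ∑ e : E, μ0S s * μ0E e * expRewAux T Te q r H π s e


noncomputable def Vfun {S A : Type*} [Fintype A] [Nonempty A]
    (T : S → A → S) (r : S → A → ℝ) : ℕ → S → ℝ
  | 0, _ => 0
  | n + 1, s => Finset.univ.sup' Finset.univ_nonempty (fun a => r s a + Vfun T r n (T s a))

noncomputable def gsel {S A : Type*} [Fintype A] [Nonempty A]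
    (T : S → A → S) (r : S → A → ℝ) (n : ℕ) (s : S) : A :=
  (Finset.exists_mem_eq_sup' Finset.univ_nonempty
    (fun a => r s a + Vfun T r n (T s a))).choose

lemma gsel_spec {S A : Type*} [Fintype A] [Nonempty A]
    (T : S → A → S) (r : S → A → ℝ) (n : ℕ) (s : S) :
    Vfun T r (n + 1) s = r s (gsel T r n s) + Vfun T r n (T s (gsel T r n s)) := by
  have h := (Finset.exists_mem_eq_sup' Finset.univ_nonempty
    (fun a => r s a + Vfun T r n (T s a))).choose_spec
  simpa [Vfun, gsel] using h.2

lemma expRewAux_le_Vfun {S E X A : Type*} [Fintype E] [Fintype X] [Fintype A] [Nonempty A]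
    (T : S → A → S) (Te : E → E → ℝ) (q : S → E → X → ℝ) (r : S → A → ℝ)
    (hTe_nonneg : ∀ e e', 0 ≤ Te e e') (hTe_sum : ∀ e, ∑ e' : E, Te e e' = 1)
    (hq_nonneg : ∀ s e x, 0 ≤ q s e x) (hq_sum : ∀ s e, ∑ x : X, q s e x = 1) :
    ∀ (n : ℕ) (π : List (X × A) → X → A → ℝ),
      (∀ hist x a, 0 ≤ π hist x a) → (∀ hist x, ∑ a : A, π hist x a = 1) →
      ∀ s e, expRewAux T Te q r n π s e ≤ Vfun T r n s := by
  intro n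
  induction n with
  | zero => intro π _ _ s e; simp [expRewAux, Vfun]
  | succ m ih =>
    intro π hπ0 hπ1 s e
    rw [expRewAux]
    have key : ∀ x : X, q s e x * (∑ a : A, π [] x a *
        (r s a + ∑ e' : E, Te e e' *
          expRewAux T Te q r m (fun hist => π ((x, a) :: hist)) (T s a) e'))
        ≤ q s e x * Vfun T r (m + 1) s := by
      intro x
      apply mul_le_mul_of_nonneg_left _ (hq_nonneg s e x)
      have inner : ∀ a : A, π [] x a *
          (r s a + ∑ e' : E, Te e e' *
            expRewAux T Te q r m (fun hist => π ((x, a) :: hist)) (T s a) e')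
          ≤ π [] x a * Vfun T r (m + 1) s := by
        intro a
        apply mul_le_mul_of_nonneg_left _ (hπ0 [] x a)
        have h1 : ∑ e' : E, Te e e' *
            expRewAux T Te q r m (fun hist => π ((x, a) :: hist)) (T s a) e'
            ≤ Vfun T r m (T s a) := by
          calc ∑ e' : E, Te e e' *
              expRewAux T Te q r m (fun hist => π ((x, a) :: hist)) (T s a) e'
              ≤ ∑ e' : E, Te e e' * Vfun T r m (T s a) := by
                apply Finset.sum_le_sum
                intro e' _
                exact mul_le_mul_of_nonneg_left
                  (ih (fun hist => π ((x, a) :: hist)) (fun h x' a' => hπ0 _ x' a')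
                    (fun h x' => hπ1 _ x') (T s a) e')
                  (hTe_nonneg e e')
            _ = Vfun T r m (T s a) := by rw [← Finset.sum_mul, hTe_sum, one_mul]
        have h2 : r s a + Vfun T r m (T s a) ≤ Vfun T r (m + 1) s := by
          rw [Vfun]
          exact Finset.le_sup' (fun a => r s a + Vfun T r m (T s a)) (Finset.mem_univ a)
        linarith
      calc ∑ a : A, π [] x a *
          (r s a + ∑ e' : E, Te e e' *
            expRewAux T Te q r m (fun hist => π ((x, a) :: hist)) (T s a) e')
          ≤ ∑ a : A, π [] x a * Vfun T r (m + 1) s := Finset.sum_le_sum fun a _ => inner a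
        _ = Vfun T r (m + 1) s := by rw [← Finset.sum_mul, hπ1, one_mul]
    calc (∑ x : X, q s e x * ∑ a : A, π [] x a *
        (r s a + ∑ e' : E, Te e e' *
          expRewAux T Te q r m (fun hist => π ((x, a) :: hist)) (T s a) e'))
        ≤ ∑ x : X, q s e x * Vfun T r (m + 1) s := Finset.sum_le_sum fun x _ => key x
      _ = Vfun T r (m + 1) s := by rw [← Finset.sum_mul, hq_sum, one_mul]

noncomputable def sigPol {S A : Type*} [Fintype A] [Nonempty A] [DecidableEq A]
    (T : S → A → S) (r : S → A → ℝ) (H t : ℕ) (s : S) (a : A) : ℝ :=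
  if a = gsel T r (H - t - 1) s then 1 else 0

lemma greedy_eq {S E X A : Type*} [Fintype E] [Fintype X] [Fintype A] [Nonempty A]
    [DecidableEq A]
    (T : S → A → S) (Te : E → E → ℝ) (q : S → E → X → ℝ) (fstar : X → S)
    (hTe_sum : ∀ e, ∑ e' : E, Te e e' = 1)
    (hq_nonneg : ∀ s e x, 0 ≤ q s e x) (hq_sum : ∀ s e, ∑ x : X, q s e x = 1)
    (hblock : ∀ s e x, 0 < q s e x → fstar x = s)
    (r : S → A → ℝ) (H : ℕ) :
    ∀ (n k : ℕ), H - k = n → ∀ s e,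
      expRewAux T Te q r n (fun hist x => sigPol T r H (k + hist.length) (fstar x)) s e
        = Vfun T r n s := by
  intro n
  induction n with
  | zero => intro k hk s e; simp [expRewAux, Vfun]
  | succ m ih =>
    intro k hk s e
    have hk' : H - (k + 1) = m := by omega
    have hm1 : H - k - 1 = m := by omega
    have hshift : ∀ (x : X) (a : A),
        (fun hist => (fun hist (x : X) => sigPol T r H (k + hist.length) (fstar x))
          ((x, a) :: hist))
        = fun hist (x : X) => sigPol T r H ((k + 1) + hist.length) (fstar x) := by
      intro x a
      funext hist x'
      simp only [List.length_cons]
      have h : k + (hist.length + 1) = (k + 1) + hist.length := by omega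
      rw [h]
    rw [expRewAux]
    have hE : ∀ (x : X) (a : A),
        (∑ e' : E, Te e e' * expRewAux T Te q r m
          (fun hist => (fun hist (x : X) => sigPol T r H (k + hist.length) (fstar x))
            ((x, a) :: hist)) (T s a) e')
        = Vfun T r m (T s a) := by
      intro x a
      rw [hshift x a]
      calc (∑ e' : E, Te e e' * expRewAux T Te q r m
            (fun hist (x : X) => sigPol T r H ((k + 1) + hist.length) (fstar x)) (T s a) e')
          = ∑ e' : E, Te e e' * Vfun T r m (T s a) :=
            Finset.sum_congr rfl fun e' _ => by rw [ih (k + 1) hk' (T s a) e']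
        _ = Vfun T r m (T s a) := by rw [← Finset.sum_mul, hTe_sum, one_mul]
    trans (∑ x : X, q s e x * Vfun T r (m + 1) s)
    · refine Finset.sum_congr rfl fun x _ => ?_
      rcases (hq_nonneg s e x).eq_or_lt with hq0 | hq0
      · rw [← hq0, zero_mul, zero_mul]
      · have hfs : fstar x = s := hblock s e x hq0
        congr 1
        calc (∑ a : A, sigPol T r H (k + List.length []) (fstar x) a *
              (r s a + ∑ e' : E, Te e e' * expRewAux T Te q r m
                (fun hist => (fun hist (x : X) => sigPol T r H (k + hist.length) (fstar x))
                  ((x, a) :: hist)) (T s a) e'))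
            = ∑ a : A, sigPol T r H k s a * (r s a + Vfun T r m (T s a)) :=
              Finset.sum_congr rfl fun a _ => by rw [hE x a, hfs]; norm_num
          _ = Vfun T r (m + 1) s := by
              simp only [sigPol, hm1, ite_mul, one_mul, zero_mul,
                Finset.sum_ite_eq', Finset.mem_univ, if_true]
              rw [gsel_spec]
    · rw [← Finset.sum_mul, hq_sum, one_mul]

theorem ac_state_optimal_policy_is_endogenous
    {S E X A : Type*}
    [Fintype S] [Fintype E] [Fintype X] [Fintype A]
    [DecidableEq S] [DecidableEq E] [DecidableEq X] [DecidableEq A]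
    [Nonempty S] [Nonempty E] [Nonempty X] [Nonempty A]
    -- deterministic Ex-BMDP data
    (T : S → A → S) (Te : E → E → ℝ) (q : S → E → X → ℝ)
    (fstar : X → S) (fstarE : X → E)
    (hTe_nonneg : ∀ e e', 0 ≤ Te e e') (hTe_sum : ∀ e, ∑ e' : E, Te e e' = 1)
    (hq_nonneg : ∀ s e x, 0 ≤ q s e x) (hq_sum : ∀ s e, ∑ x : X, q s e x = 1)
    -- block assumption: the decoders recover the latent state on the support
    (hblock : ∀ s e x, 0 < q s e x → fstar x = s ∧ fstarE x = e)
    -- reward on endogenous state and action, with values in [0,1]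
    (r : S → A → ℝ) (hr_nonneg : ∀ s a, 0 ≤ r s a) (hr_le : ∀ s a, r s a ≤ 1)
    -- product initial latent distribution
    (μ0S : S → ℝ) (μ0E : E → ℝ)
    (hμ0S_nonneg : ∀ s, 0 ≤ μ0S s) (hμ0S_sum : ∑ s : S, μ0S s = 1)
    (hμ0E_nonneg : ∀ e, 0 ≤ μ0E e) (hμ0E_sum : ∑ e : E, μ0E e = 1)
    (H : ℕ) (hH : 1 ≤ H) :
    ∃ σ : ℕ → S → A → ℝ,
      (∀ t s a, 0 ≤ σ t s a) ∧ (∀ t s, ∑ a : A, σ t s a = 1) ∧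
      ∀ π : List (X × A) → X → A → ℝ,
        (∀ hist x a, 0 ≤ π hist x a) → (∀ hist x, ∑ a : A, π hist x a = 1) →
        expRew T Te q r μ0S μ0E H π
          ≤ expRew T Te q r μ0S μ0E H (fun hist x => σ hist.length (fstar x)) := by
  refine ⟨fun t s a => sigPol T r H t s a, ?_, ?_, ?_⟩
  · intro t s a; simp only [sigPol]; split <;> norm_num
  · intro t s; simp only [sigPol]; simp [Finset.sum_ite_eq']
  · intro π hπ0 hπ1
    have hpol : (fun (hist : List (X × A)) (x : X) =>
        (fun t s a => sigPol T r H t s a) hist.length (fstar x))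
        = fun (hist : List (X × A)) (x : X) => sigPol T r H (0 + hist.length) (fstar x) := by
      funext hist x
      rw [Nat.zero_add]
    unfold expRew
    apply Finset.sum_le_sum
    intro s _
    apply Finset.sum_le_sum
    intro e _
    apply mul_le_mul_of_nonneg_left _ (mul_nonneg (hμ0S_nonneg s) (hμ0E_nonneg e))
    calc expRewAux T Te q r H π s e
        ≤ Vfun T r H s := expRewAux_le_Vfun T Te q r hTe_nonneg hTe_sum hq_nonneg
          hq_sum H π hπ0 hπ1 s e
      _ = expRewAux T Te q r H
          (fun (hist : List (X × A)) (x : X) =>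
            (fun t s a => sigPol T r H t s a) hist.length (fstar x)) s e := by
          rw [hpol]
          exact (greedy_eq T Te q fstar hTe_sum hq_nonneg hq_sum
            (fun s e x h => (hblock s e x h).1) r H H 0 (Nat.sub_zero H) s e).symm
end
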